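/- Let p' > p be positive integers, and let r, s be integers with 0 < r < p and 0 < s < p'. Then for every nonnegative integer L, the polynomial ∑_{j∈ℤ} ( q^{j^2 p p' + (r p' − s p) j} [L choose ⌊(L−r+s)/2⌋ − j p']_q − q^{(jp+r)(jp'+s)} [L choose ⌊(L−r−s)/2⌋ − j p']_q ) has nonnegative coefficients. -/
import Mathlib


open LaurentPolynomial Finset

noncomputable section

/-- The Gaussian binomial coefficient `[m choose n]_q` as a polynomial in `q`,
defined via the `q`-Pascal recurrence; it equals `(q;q)_m/((q;q)_n (q;q)_{m-n})`
for `0 ≤ n ≤ m`. -/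
def gb : ℕ → ℕ → Polynomial ℤ
  | _, 0 => 1
  | 0, _ + 1 => 0
  | m + 1, n + 1 => gb m n + Polynomial.X ^ (n + 1) * gb m (n + 1)

/-- `[m choose n]_q` with integer indices, zero unless `0 ≤ n ≤ m`,
viewed as a Laurent polynomial in `q`. -/
def qbin (m n : ℤ) : LaurentPolynomial ℤ :=
  if 0 ≤ n ∧ n ≤ m then (gb m.toNat n.toNat).toLaurent else 0

/-- A Laurent polynomial is a polynomial in `q` with nonnegative coefficients. -/
def IsNonneg (x : LaurentPolynomial ℤ) : Prop :=
  ∃ P : Polynomial ℤ, (∀ n, 0 ≤ P.coeff n) ∧ P.toLaurent = x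

/-- The triangular number `T(j) = j(j+1)/2`. -/
def tri (j : ℤ) : ℤ := j * (j + 1) / 2

lemma gb_zero_right : ∀ m : ℕ, gb m 0 = 1
  | 0 => by simp [gb]
  | m + 1 => by simp [gb]

lemma gb_succ_succ (m n : ℕ) : gb (m+1) (n+1) = gb m n + Polynomial.X ^ (n + 1) * gb m (n + 1) := by
  simp [gb]

lemma gb_zero (n : ℕ) : gb 0 n = if n = 0 then 1 else 0 := by
  cases n <;> simp [gb]

lemma gb_eq_zero_of_lt : ∀ m n : ℕ, m < n → gb m n = 0
  | 0, n, h => by cases n; · omega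
                  · simp [gb]
  | m + 1, n, h => by
      match n, h with
      | n + 1, h =>
        have h1 : m < n := by omega
        have h2 : m < n + 1 := by omega
        simp [gb, gb_eq_zero_of_lt m n h1, gb_eq_zero_of_lt m (n+1) h2]

lemma gb_self : ∀ m : ℕ, gb m m = 1
  | 0 => by simp [gb]
  | m + 1 => by
      simp [gb, gb_self m, gb_eq_zero_of_lt m (m+1) (by omega)]

lemma gb_coeff_nonneg : ∀ m n : ℕ, ∀ k : ℕ, 0 ≤ (gb m n).coeff k
  | _, 0, k => by
      rw [gb_zero_right, Polynomial.coeff_one]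
      split <;> norm_num
  | 0, n + 1, k => by simp [gb]
  | m + 1, n + 1, k => by
      rw [gb_succ_succ, Polynomial.coeff_add]
      have h1 := gb_coeff_nonneg m n k
      have h2 : (0:ℤ) ≤ (Polynomial.X ^ (n+1) * gb m (n+1)).coeff k := by
        rw [(Polynomial.commute_X_pow (gb m (n+1)) (n+1)).eq, Polynomial.coeff_mul_X_pow']
        split
        · exact gb_coeff_nonneg m (n+1) _
        · exact le_refl 0
      linarith

lemma qbin_eq_zero {m n : ℤ} (h : ¬(0 ≤ n ∧ n ≤ m)) : qbin m n = 0 := by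
  simp [qbin, h]

lemma qbin_of_le {m n : ℤ} (h : 0 ≤ n) (h2 : n ≤ m) :
    qbin m n = (gb m.toNat n.toNat).toLaurent := by
  simp [qbin, h, h2]

lemma qbin_zero (n : ℤ) : qbin 0 n = if n = 0 then 1 else 0 := by
  by_cases h : n = 0
  · subst h; rw [qbin_of_le le_rfl le_rfl]; simp [gb_zero_right]
  · simp [h]; exact qbin_eq_zero (by omega)

lemma qbin_pascal1 (L : ℕ) (k : ℤ) :
    qbin ((L : ℤ) + 1) k = qbin L (k - 1) + T k * qbin L k := by
  rcases lt_or_ge k 0 with hk | hk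
  · rw [qbin_eq_zero (by omega), qbin_eq_zero (m := (L:ℤ)) (by omega),
      qbin_eq_zero (m := (L:ℤ)) (by omega)]; ring
  rcases eq_or_lt_of_le hk with hk0 | hk0
  · rw [← hk0]
    rw [qbin_of_le le_rfl (by omega), qbin_of_le le_rfl (by omega)]
    rw [qbin_eq_zero (by omega)]
    simp [gb_zero_right]
  rcases le_or_gt k ((L : ℤ) + 1) with hkL | hkL
  · obtain ⟨k', hk'⟩ : ∃ k' : ℕ, k.toNat = k' + 1 := ⟨k.toNat - 1, by omega⟩
    have h1 : qbin ((L:ℤ)+1) k = (gb (L+1) (k'+1)).toLaurent := by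
      rw [qbin_of_le (by omega) (by omega), show ((L:ℤ)+1).toNat = L + 1 by omega, hk']
    rw [h1, gb_succ_succ, map_add, map_mul, Polynomial.toLaurent_X_pow]
    have hT : (T ((k'+1 : ℕ) : ℤ) : LaurentPolynomial ℤ) = T k := by
      congr 1; omega
    rcases le_or_gt k (L : ℤ) with h | h
    · rw [qbin_of_le (by omega) (by omega), qbin_of_le (by omega) h, hT]
      have e1 : ((L:ℤ)).toNat = L := by omega
      have e2 : (k - 1).toNat = k' := by omega
      have e3 : k.toNat = k' + 1 := hk'
      rw [e1, e2, e3]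
    · have hkL1 : k = (L : ℤ) + 1 := by omega
      rw [qbin_of_le (by omega) (by omega), qbin_eq_zero (by omega)]
      have e1 : ((L:ℤ)).toNat = L := by omega
      have e2 : (k - 1).toNat = k' := by omega
      have e4 : k' = L := by omega
      rw [e1, e2, e4]
      have : gb L (L+1) = 0 := gb_eq_zero_of_lt L (L+1) (by omega)
      rw [this]; simp
  · rw [qbin_eq_zero (by omega), qbin_eq_zero (by omega),
      qbin_eq_zero (m := (L:ℤ)) (by omega)]; ring

lemma qbin_pascal2 : ∀ (L : ℕ) (k : ℤ),
    qbin ((L : ℤ) + 1) k = qbin L k + T ((L : ℤ) + 1 - k) * qbin L (k - 1)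
  | 0, k => by
    simp only [Nat.cast_zero]
    by_cases h0 : k = 0
    · subst h0
      rw [qbin_zero, qbin_zero, qbin_of_le le_rfl (by norm_num)]
      simp [gb_zero_right]
    by_cases h1 : k = 1
    · subst h1
      rw [qbin_of_le (by norm_num) (by norm_num), qbin_zero, qbin_zero]
      norm_num
      rw [gb_self 1]
      simp
    · rw [qbin_eq_zero (by omega), qbin_eq_zero (by omega), qbin_eq_zero (by omega)]
      ring
  | L + 1, k => by
    have hc : ((L + 1 : ℕ) : ℤ) = (L : ℤ) + 1 := by push_cast; ring
    have h2 : ((L:ℤ) + 1 - (k - 1) : ℤ) = (L:ℤ) + 1 + 1 - k := by ring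
    have e1 : (T k : LaurentPolynomial ℤ) * T ((L:ℤ) + 1 - k) =
        T ((L:ℤ) + 1 + 1 - k) * T (k - 1) := by
      rw [← T_add, ← T_add]; congr 1; ring
    conv_lhs => rw [qbin_pascal1 (L+1) k]
    rw [hc]
    conv_lhs => rw [qbin_pascal2 L (k-1), qbin_pascal2 L k, h2]
    conv_rhs => rw [qbin_pascal1 L k, qbin_pascal1 L (k-1)]
    linear_combination (qbin L (k-1)) * e1

lemma qbin_symm : ∀ (L : ℕ) (k : ℤ), qbin L k = qbin L ((L : ℤ) - k)
  | 0, k => by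
    simp only [Nat.cast_zero]
    rw [qbin_zero, qbin_zero]
    by_cases h : k = 0 <;> simp [h]
  | L + 1, k => by
    have hc : ((L + 1 : ℕ) : ℤ) = (L : ℤ) + 1 := by push_cast; ring
    rw [hc, qbin_pascal1 L k, qbin_symm L (k - 1), qbin_symm L k,
      qbin_pascal2 L ((L:ℤ) + 1 - k)]
    rw [show (L:ℤ) - (k - 1) = (L:ℤ) + 1 - k by ring,
      show (L:ℤ) + 1 - ((L:ℤ) + 1 - k) = k by ring,
      show (L:ℤ) + 1 - k - 1 = (L:ℤ) - k by ring]

lemma isNonneg_zero : IsNonneg 0 := ⟨0, by simp, by simp⟩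

lemma isNonneg_one : IsNonneg 1 := ⟨1, by simp [Polynomial.coeff_one]; intro n; split <;> norm_num, by simp⟩

lemma isNonneg_add {x y : LaurentPolynomial ℤ} (hx : IsNonneg x) (hy : IsNonneg y) :
    IsNonneg (x + y) := by
  obtain ⟨P, hP, hPx⟩ := hx
  obtain ⟨Q, hQ, hQy⟩ := hy
  exact ⟨P + Q, fun n => by simp only [Polynomial.coeff_add]; exact add_nonneg (hP n) (hQ n),
    by rw [map_add, hPx, hQy]⟩

lemma isNonneg_T_mul {k : ℤ} (hk : 0 ≤ k) {x : LaurentPolynomial ℤ} (hx : IsNonneg x) :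
    IsNonneg (T k * x) := by
  obtain ⟨P, hP, hPx⟩ := hx
  refine ⟨Polynomial.X ^ k.toNat * P, fun n => ?_, ?_⟩
  · rw [(Polynomial.commute_X_pow P k.toNat).eq, Polynomial.coeff_mul_X_pow']
    split
    · exact hP _
    · exact le_rfl
  · rw [map_mul, Polynomial.toLaurent_X_pow, hPx]
    congr 1
    congr 1
    omega

lemma isNonneg_qbin (m n : ℤ) : IsNonneg (qbin m n) := by
  by_cases h : 0 ≤ n ∧ n ≤ m
  · rw [qbin_of_le h.1 h.2]
    exact ⟨gb m.toNat n.toNat, fun k => gb_coeff_nonneg _ _ _, rfl⟩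
  · rw [qbin_eq_zero h]; exact isNonneg_zero

def trm (p p' s ℓ a ρ j : ℤ) : LaurentPolynomial ℤ :=
  T (j ^ 2 * p * p' + (ρ * p' - s * p) * j) * qbin ℓ (a - j * p') -
    T ((j * p + ρ) * (j * p' + s)) * qbin ℓ (a - s - j * p')

def Fn (p p' s : ℤ) (L : ℕ) (a ρ : ℤ) : LaurentPolynomial ℤ :=
  ∑ᶠ j : ℤ, trm p p' s L a ρ j

lemma trm_eq_zero {p p' s a ρ j : ℤ} (hp' : 1 ≤ p') (L : ℕ)
    (h : (L : ℤ) + a.natAbs + s.natAbs < j.natAbs) : trm p p' s L a ρ j = 0 := by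
  have hm : j.natAbs ≤ (j * p').natAbs := by
    rw [Int.natAbs_mul]
    exact Nat.le_mul_of_pos_right _ (by omega)
  have h1 : qbin L (a - j * p') = 0 := qbin_eq_zero (by
    intro ⟨c1, c2⟩
    have hb : -((L:ℤ)) ≤ a - (a - j * p') ∧ a - (a - j * p') ≤ a := by omega
    omega)
  have h2 : qbin L (a - s - j * p') = 0 := qbin_eq_zero (by
    intro ⟨c1, c2⟩
    omega)
  rw [trm, h1, h2]
  ring

lemma Fn_eq_sum {p p' s : ℤ} (hp' : 1 ≤ p') (L : ℕ) (a ρ lo hi : ℤ)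
    (hlo : lo ≤ -((L : ℤ) + a.natAbs + s.natAbs))
    (hhi : (L : ℤ) + a.natAbs + s.natAbs ≤ hi) :
    Fn p p' s L a ρ = ∑ j ∈ Finset.Icc lo hi, trm p p' s L a ρ j := by
  apply finsum_eq_sum_of_support_subset
  intro j hj
  simp only [Function.mem_support] at hj
  simp only [Finset.coe_Icc, Set.mem_Icc]
  by_contra hc
  exact hj (trm_eq_zero hp' L (by omega))

lemma step1 (L : ℕ) (k₁ k₂ c A B A' B' : ℤ) (hA : A' = A + k₁ - c) (hB : B' = B + k₂ - c) :
    T A * qbin ((L:ℤ)+1) k₁ - T B * qbin ((L:ℤ)+1) k₂ =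
      (T A * qbin L (k₁ - 1) - T B * qbin L (k₂ - 1)) +
        T c * (T A' * qbin L k₁ - T B' * qbin L k₂) := by
  rw [qbin_pascal1 L k₁, qbin_pascal1 L k₂]
  have h1 : (T A : LaurentPolynomial ℤ) * T k₁ = T c * T A' := by
    rw [← T_add, ← T_add]; congr 1; omega
  have h2 : (T B : LaurentPolynomial ℤ) * T k₂ = T c * T B' := by
    rw [← T_add, ← T_add]; congr 1; omega
  linear_combination qbin (L:ℤ) k₁ * h1 - qbin (L:ℤ) k₂ * h2

lemma step2 (L : ℕ) (k₁ k₂ c A B A' B' : ℤ)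
    (hA : A' = A + ((L:ℤ) + 1 - k₁) - c) (hB : B' = B + ((L:ℤ) + 1 - k₂) - c) :
    T A * qbin ((L:ℤ)+1) k₁ - T B * qbin ((L:ℤ)+1) k₂ =
      (T A * qbin L k₁ - T B * qbin L k₂) +
        T c * (T A' * qbin L (k₁ - 1) - T B' * qbin L (k₂ - 1)) := by
  rw [qbin_pascal2 L k₁, qbin_pascal2 L k₂]
  have h1 : (T A : LaurentPolynomial ℤ) * T ((L:ℤ) + 1 - k₁) = T c * T A' := by
    rw [← T_add, ← T_add]; congr 1; omega
  have h2 : (T B : LaurentPolynomial ℤ) * T ((L:ℤ) + 1 - k₂) = T c * T B' := by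
    rw [← T_add, ← T_add]; congr 1; omega
  linear_combination qbin (L:ℤ) (k₁ - 1) * h1 - qbin (L:ℤ) (k₂ - 1) * h2

lemma trm_cast (p p' s a ρ j : ℤ) (L : ℕ) :
    trm p p' s ((L+1 : ℕ) : ℤ) a ρ j = trm p p' s ((L:ℤ)+1) a ρ j := by
  have : ((L+1 : ℕ) : ℤ) = (L:ℤ)+1 := by push_cast; ring
  rw [this]

lemma rec1 {p p' s : ℤ} (hp' : 1 ≤ p') (L : ℕ) (a ρ : ℤ) :
    Fn p p' s (L+1) a ρ = Fn p p' s L (a-1) ρ + T a * Fn p p' s L a (ρ-1) := by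
  set M : ℤ := (L : ℤ) + 1 + (a.natAbs + 1) + s.natAbs with hM
  have hb : (0:ℤ) ≤ (L:ℤ) + 1 + (a.natAbs + 1) + s.natAbs := by positivity
  rw [Fn_eq_sum hp' (L+1) a ρ (-M) M (by omega) (by omega),
    Fn_eq_sum hp' L (a-1) ρ (-M) M (by have := Int.natAbs_sub_le a 1; omega)
      (by have := Int.natAbs_sub_le a 1; omega),
    Fn_eq_sum hp' L a (ρ-1) (-M) M (by omega) (by omega),
    Finset.mul_sum, ← Finset.sum_add_distrib]
  apply Finset.sum_congr rfl
  intro j _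
  rw [trm_cast, trm, trm, trm,
    show a - 1 - j * p' = a - j * p' - 1 by ring,
    show a - 1 - s - j * p' = a - s - j * p' - 1 by ring]
  exact step1 L (a - j * p') (a - s - j * p') a _ _ _ _ (by ring) (by ring)

lemma rec2 {p p' s : ℤ} (hp' : 1 ≤ p') (L : ℕ) (a ρ : ℤ) :
    Fn p p' s (L+1) a ρ = Fn p p' s L a ρ + T ((L:ℤ) + 1 - a) * Fn p p' s L (a-1) (ρ+1) := by
  set M : ℤ := (L : ℤ) + 1 + (a.natAbs + 1) + s.natAbs with hM
  rw [Fn_eq_sum hp' (L+1) a ρ (-M) M (by omega) (by omega),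
    Fn_eq_sum hp' L a ρ (-M) M (by omega) (by omega),
    Fn_eq_sum hp' L (a-1) (ρ+1) (-M) M (by have := Int.natAbs_sub_le a 1; omega)
      (by have := Int.natAbs_sub_le a 1; omega),
    Finset.mul_sum, ← Finset.sum_add_distrib]
  apply Finset.sum_congr rfl
  intro j _
  rw [trm_cast, trm, trm, trm,
    show a - 1 - j * p' = a - j * p' - 1 by ring,
    show a - 1 - s - j * p' = a - s - j * p' - 1 by ring]
  exact step2 L (a - j * p') (a - s - j * p') ((L:ℤ) + 1 - a) _ _ _ _ (by ring) (by ring)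

lemma wall0 {p p' s : ℤ} (hp' : 1 ≤ p') (L : ℕ) (a : ℤ) (h : 2 * a = (L:ℤ) + s) :
    Fn p p' s L a 0 = 0 := by
  set M : ℤ := (L : ℤ) + a.natAbs + s.natAbs with hM
  rw [Fn_eq_sum hp' L a 0 (-M) M (by omega) (by omega)]
  simp only [trm]
  rw [Finset.sum_sub_distrib, sub_eq_zero]
  refine Finset.sum_bij' (fun j _ => -j) (fun j _ => -j) ?_ ?_ ?_ ?_ ?_
  · intro j hj; simp only [Finset.mem_Icc] at *; omega
  · intro j hj; simp only [Finset.mem_Icc] at *; omega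
  · intro j _; ring
  · intro j _; ring
  · intro j _
    congr 1
    · congr 1; ring
    · rw [qbin_symm L (a - j * p')]
      congr 1
      rw [show (-j) * p' = -(j * p') by ring]
      omega

lemma wallp {p p' s : ℤ} (hp' : 1 ≤ p') (L : ℕ) (a : ℤ) (h : 2 * a = (L:ℤ) + s - p') :
    Fn p p' s L a p = 0 := by
  set M : ℤ := (L : ℤ) + a.natAbs + s.natAbs with hM
  rw [Fn_eq_sum hp' L a p (-(M+1)) M (by omega) (by omega)]
  simp only [trm]
  rw [Finset.sum_sub_distrib, sub_eq_zero]
  refine Finset.sum_bij' (fun j _ => -1-j) (fun j _ => -1-j) ?_ ?_ ?_ ?_ ?_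
  · intro j hj; simp only [Finset.mem_Icc] at *; omega
  · intro j hj; simp only [Finset.mem_Icc] at *; omega
  · intro j _; ring
  · intro j _; ring
  · intro j _
    congr 1
    · congr 1; ring
    · rw [qbin_symm L (a - j * p')]
      congr 1
      rw [show (-1 - j) * p' = -p' - j * p' by ring]
      omega

lemma base {p p' s : ℤ} (hp : 1 ≤ p) (hpp' : p < p') (hs0 : 0 < s) (hsp' : s < p')
    (a ρ : ℤ) (h1 : ρ ≤ s - 2*a) (h2 : s - 2*a ≤ ρ + (p' - p)) (h3 : 0 ≤ ρ) (h4 : ρ ≤ p) :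
    Fn p p' s 0 a ρ = if a = 0 then 1 else 0 := by
  have hp' : (1:ℤ) ≤ p' := by omega
  set M : ℤ := a.natAbs + s.natAbs with hM
  have hmj : ∀ j : ℤ, j = 0 ∨ (p'.natAbs ≤ (j * p').natAbs) := by
    intro j
    rcases eq_or_ne j 0 with h | h
    · exact Or.inl h
    · right
      rw [Int.natAbs_mul]
      exact Nat.le_mul_of_pos_left _ (by omega)
  rw [Fn_eq_sum hp' 0 a ρ (-M) M (by omega) (by omega)]
  simp only [Nat.cast_zero]
  by_cases ha : a = 0
  · subst ha
    rw [if_pos rfl]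
    rw [Finset.sum_eq_single_of_mem 0 (by simp only [Finset.mem_Icc]; omega)]
    · rw [trm]
      have e1 : qbin 0 (0 - 0 * p') = 1 := by rw [qbin_zero]; norm_num
      have e2 : qbin 0 (0 - s - 0 * p') = 0 := by
        rw [qbin_zero, if_neg (by omega)]
      rw [e1, e2]
      rw [show (0:ℤ) ^ 2 * p * p' + (ρ * p' - s * p) * 0 = 0 by ring]
      simp
    · intro j _ hjne
      rcases hmj j with h | hm
      · exact absurd h hjne
      rw [trm]
      have e1 : qbin 0 (0 - j * p') = 0 := qbin_eq_zero (by omega)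
      have e2 : qbin 0 (0 - s - j * p') = 0 := qbin_eq_zero (by omega)
      rw [e1, e2]
      ring
  · rw [if_neg ha]
    apply Finset.sum_eq_zero
    intro j _
    rcases hmj j with h | hm
    · subst h
      rw [trm]
      have e1 : qbin 0 (a - 0 * p') = 0 := qbin_eq_zero (by omega)
      have e2 : qbin 0 (a - s - 0 * p') = 0 := qbin_eq_zero (by omega)
      rw [e1, e2]; ring
    · rw [trm]
      have e1 : qbin 0 (a - j * p') = 0 := qbin_eq_zero (by omega)
      have e2 : qbin 0 (a - s - j * p') = 0 := qbin_eq_zero (by omega)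
      rw [e1, e2]; ring

lemma main {p p' s : ℤ} (hp : 1 ≤ p) (hpp' : p < p') (hs0 : 0 < s) (hsp' : s < p') :
    ∀ (L : ℕ) (a ρ : ℤ), ρ ≤ (L:ℤ) + s - 2*a → (L:ℤ) + s - 2*a ≤ ρ + (p' - p) →
      0 ≤ ρ → ρ ≤ p →
      IsNonneg (Fn p p' s L a ρ) ∧ ((a < 0 ∨ (L:ℤ) < a) → Fn p p' s L a ρ = 0)
  | 0, a, ρ, h1, h2, h3, h4 => by
      have hb := base hp hpp' hs0 hsp' a ρ (by omega) (by omega) h3 h4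
      rw [hb]
      constructor
      · split
        · exact isNonneg_one
        · exact isNonneg_zero
      · intro h
        rw [if_neg (by omega)]
  | L+1, a, ρ, h1, h2, h3, h4 => by
      have hp' : (1:ℤ) ≤ p' := by omega
      have hL : ((L+1:ℕ):ℤ) = (L:ℤ)+1 := by push_cast; ring
      rw [hL] at h1 h2
      by_cases hw0 : (L:ℤ) + 1 + s - 2*a = 0 ∧ ρ = 0
      · have hz : Fn p p' s (L+1) a ρ = 0 := by
          rw [hw0.2]
          exact wall0 hp' (L+1) a (by push_cast; omega)
        rw [hz]
        exact ⟨isNonneg_zero, fun _ => rfl⟩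
      by_cases hwp : (L:ℤ) + 1 + s - 2*a = p' ∧ ρ = p
      · have hz : Fn p p' s (L+1) a ρ = 0 := by
          rw [hwp.2]
          exact wallp hp' (L+1) a (by push_cast; omega)
        rw [hz]
        exact ⟨isNonneg_zero, fun _ => rfl⟩
      by_cases hd : (L:ℤ) + 1 + s - 2*a = ρ ∨ ρ = p
      · have IH1 := main hp hpp' hs0 hsp' L (a-1) ρ (by omega) (by omega) h3 h4
        have IH2 := main hp hpp' hs0 hsp' L a (ρ-1) (by omega) (by omega) (by omega) (by omega)
        have hrec := rec1 (p := p) (p' := p') (s := s) hp' L a ρ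
        have hz : (a < 0 ∨ (L:ℤ) + 1 < a) → Fn p p' s (L+1) a ρ = 0 := by
          intro h
          rw [hrec, IH1.2 (by omega), IH2.2 (by omega)]
          simp
        constructor
        · by_cases hneg : a < 0 ∨ (L:ℤ) + 1 < a
          · rw [hz hneg]; exact isNonneg_zero
          · rw [hrec]
            exact isNonneg_add IH1.1 (isNonneg_T_mul (by omega) IH2.1)
        · intro h
          exact hz (by omega)
      · have IH1 := main hp hpp' hs0 hsp' L a ρ (by omega) (by omega) h3 h4
        have IH2 := main hp hpp' hs0 hsp' L (a-1) (ρ+1) (by omega) (by omega) (by omega) (by omega)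
        have hrec := rec2 (p := p) (p' := p') (s := s) hp' L a ρ
        have hz : (a < 0 ∨ (L:ℤ) + 1 < a) → Fn p p' s (L+1) a ρ = 0 := by
          intro h
          rw [hrec, IH1.2 (by omega), IH2.2 (by omega)]
          simp
        constructor
        · by_cases hneg : a < 0 ∨ (L:ℤ) + 1 < a
          · rw [hz hneg]; exact isNonneg_zero
          · rw [hrec]
            exact isNonneg_add IH1.1 (isNonneg_T_mul (by omega) IH2.1)
        · intro h
          exact hz (by omega)

/-- For positive integers `p' > p`, integers `0 < r < p`, `0 < s < p'`, and any
`L ≥ 0`, the polynomial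
`∑_{j ∈ ℤ} ( q^{j²pp' + (rp'-sp)j} [L choose ⌊(L-r+s)/2⌋ - jp']_q
           - q^{(jp+r)(jp'+s)} [L choose ⌊(L-r-s)/2⌋ - jp']_q )`
has nonnegative coefficients. -/
theorem hook_difference_nonneg (p p' : ℕ) (hp : 0 < p) (hpp' : p < p')
    (r s : ℤ) (hr0 : 0 < r) (hrp : r < p) (hs0 : 0 < s) (hsp' : s < p') (L : ℕ) :
    IsNonneg (∑ᶠ j : ℤ,
      (T (j ^ 2 * p * p' + (r * p' - s * p) * j) *
          qbin L (Int.fdiv ((L : ℤ) - r + s) 2 - j * p') -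
        T ((j * p + r) * (j * p' + s)) *
          qbin L (Int.fdiv ((L : ℤ) - r - s) 2 - j * p'))) := by
  have hpz : (1:ℤ) ≤ (p:ℤ) := by exact_mod_cast hp
  have hppz : ((p:ℤ)) < (p':ℤ) := by exact_mod_cast hpp'
  have hfd : Int.fdiv ((L:ℤ) - r - s) 2 = Int.fdiv ((L:ℤ) - r + s) 2 - s := by
    rw [Int.fdiv_eq_ediv_of_nonneg _ (by norm_num), Int.fdiv_eq_ediv_of_nonneg _ (by norm_num)]
    omega
  have ha : Int.fdiv ((L:ℤ) - r + s) 2 = ((L:ℤ) - r + s) / 2 :=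
    Int.fdiv_eq_ediv_of_nonneg _ (by norm_num)
  simp only [hfd]
  have key := (main (p := (p:ℤ)) (p' := (p':ℤ)) (s := s) hpz hppz hs0 hsp' L
      (Int.fdiv ((L:ℤ) - r + s) 2) r (by rw [ha]; omega) (by rw [ha]; omega)
      (by omega) (by omega)).1
  exact key
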